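/- arXiv:1104.1066 — 4 statements merged into one kernel-verified Lean document; each statement's English description precedes it below -/
import Mathlib

section
/- Let G be a finite group in which every Schmidt subgroup is a Hall subgroup of G, and let p and q be distinct primes dividing |G|. Then every Hall {p,q}-subgroup of G is either nilpotent or a Schmidt group. -/
/-! A non-nilpotent `{p,q}`-subgroup `K` with a non-nilpotent proper subgroup `H` would
contain a Schmidt subgroup `S ≤ H` (a minimal non-nilpotent subgroup). Being non-nilpotent,
`S` is not of prime-power order, so both `p` and `q` divide `|S|`; since `S` is a Hall subgroup of
`G`, it contains full Sylow `p`- and `q`-subgroups of `G`, hence `|K|` divides `|S|`, forcing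
`S = K`, which contradicts `S ≤ H < K`. -/

/-- A Schmidt group: a finite non-nilpotent group all of whose proper subgroups are nilpotent. -/
def IsSchmidtGroup (G : Type*) [Group G] : Prop :=
  Finite G ∧ ¬ Group.IsNilpotent G ∧ ∀ H : Subgroup G, H ≠ ⊤ → Group.IsNilpotent H

/-- A Hall subgroup: its order is coprime to its index. -/
def IsHallSubgroup {G : Type*} [Group G] (H : Subgroup G) : Prop :=
  Nat.Coprime (Nat.card H) H.index

/-- The property that every Schmidt subgroup is a Hall subgroup. -/
def EverySchmidtIsHall (G : Type*) [Group G] : Prop :=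
  ∀ S : Subgroup G, IsSchmidtGroup S → IsHallSubgroup S

section

variable {G : Type*} [Group G]

lemma exists_prime_dvd_card_ne_of_not_isNilpotent [Finite G] (hG : ¬ Group.IsNilpotent G)
    (p : ℕ) [Fact p.Prime] : ∃ r, r.Prime ∧ r ∣ Nat.card G ∧ r ≠ p := by
  by_contra! h
  exact hG (IsPGroup.of_card
    (Nat.eq_prime_pow_of_unique_prime_dvd Nat.card_pos.ne' fun hr hrG => h _ hr hrG)).isNilpotent

lemma exists_two_primes_dvd_card_of_not_isNilpotent [Finite G] (hG : ¬ Group.IsNilpotent G) :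
    ∃ r s, r.Prime ∧ s.Prime ∧ r ≠ s ∧ r ∣ Nat.card G ∧ s ∣ Nat.card G := by
  obtain ⟨r, hr, hrG, -⟩ := exists_prime_dvd_card_ne_of_not_isNilpotent hG 2
  have : Fact r.Prime := ⟨hr⟩
  obtain ⟨s, hs, hsG, hsr⟩ := exists_prime_dvd_card_ne_of_not_isNilpotent hG r
  exact ⟨r, s, hr, hs, hsr.symm, hrG, hsG⟩

lemma Subgroup.isSchmidtGroup_of_forall_lt [Finite G] {K : Subgroup G}
    (hK : ¬ Group.IsNilpotent K) (h : ∀ H < K, Group.IsNilpotent H) : IsSchmidtGroup K := by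
  refine ⟨inferInstance, hK, fun H hH => ?_⟩
  have hlt : H.map K.subtype < K := by
    simpa [← MonoidHom.range_eq_map] using
      Subgroup.map_subtype_lt_map_subtype.mpr (lt_top_iff_ne_top.mpr hH)
  exact (Group.isNilpotent_congr (H.equivMapOfInjective _ K.subtype_injective)).mpr (h _ hlt)

lemma Subgroup.exists_isSchmidtGroup_le [Finite G] {H : Subgroup G}
    (hH : ¬ Group.IsNilpotent H) : ∃ S ≤ H, IsSchmidtGroup S := by
  obtain ⟨S, hSH, hS⟩ :=
    exists_minimal_le_of_wellFoundedLT (fun S : Subgroup G => ¬ Group.IsNilpotent S) H hH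
  exact ⟨S, hSH, S.isSchmidtGroup_of_forall_lt hS.prop fun T hTS =>
    not_not.mp (hS.not_prop_of_lt hTS)⟩

lemma IsHallSubgroup.ordProj_dvd_card {S : Subgroup G} (hS : IsHallSubgroup S) {r : ℕ}
    (hr : r ∣ Nat.card S) : ordProj[r] (Nat.card G) ∣ Nat.card S :=
  ((Nat.Coprime.coprime_dvd_left hr hS).pow_left _).dvd_of_dvd_mul_right
    (S.card_mul_index ▸ Nat.ordProj_dvd _ r)

lemma IsHallSubgroup.card_dvd_card [Finite G] {S : Subgroup G} (hS : IsHallSubgroup S)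
    (K : Subgroup G) (h : ∀ r : ℕ, r.Prime → r ∣ Nat.card K → r ∣ Nat.card S) :
    Nat.card K ∣ Nat.card S := by
  rw [← Nat.factorization_prime_le_iff_dvd Nat.card_pos.ne' Nat.card_pos.ne']
  intro r hr
  by_cases hrK : r ∣ Nat.card K
  · calc (Nat.card K).factorization r ≤ (Nat.card G).factorization r :=
          (Nat.factorization_le_iff_dvd Nat.card_pos.ne' Nat.card_pos.ne').mpr
            K.card_subgroup_dvd_card r
      _ ≤ (Nat.card S).factorization r :=
          (hr.pow_dvd_iff_le_factorization Nat.card_pos.ne').mp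
            (hS.ordProj_dvd_card (h r hr hrK))
  · simp [Nat.factorization_eq_zero_of_not_dvd hrK]

lemma IsHallSubgroup.eq_of_le [Finite G] {S K : Subgroup G} (hS : IsHallSubgroup S)
    (hSK : S ≤ K) (h : ∀ r : ℕ, r.Prime → r ∣ Nat.card K → r ∣ Nat.card S) : S = K :=
  Subgroup.eq_of_le_of_card_ge hSK (Nat.le_of_dvd Nat.card_pos (hS.card_dvd_card K h))

end

theorem stmt_12_general {G : Type*} [Group G] [Finite G] (hHall : EverySchmidtIsHall G)
    (p q : ℕ) (K : Subgroup G)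
    (hKord : ∀ r : ℕ, r.Prime → r ∣ Nat.card K → r = p ∨ r = q) :
    Group.IsNilpotent ↥K ∨ IsSchmidtGroup ↥K := by
  refine or_iff_not_imp_left.mpr fun hK => K.isSchmidtGroup_of_forall_lt hK fun H hHK => ?_
  by_contra hH
  obtain ⟨S, hSH, hS⟩ := Subgroup.exists_isSchmidtGroup_le hH
  have hSK : S ≤ K := hSH.trans hHK.le
  have hSK_card : Nat.card S ∣ Nat.card K := Subgroup.card_dvd_of_le hSK
  obtain ⟨r, s, hr, hs, hrs, hrS, hsS⟩ := exists_two_primes_dvd_card_of_not_isNilpotent hS.2.1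
  have hS_eq : S = K := (hHall S hS).eq_of_le hSK fun t ht htK => by
    have := hKord t ht htK
    have := hKord r hr (hrS.trans hSK_card)
    have := hKord s hs (hsS.trans hSK_card)
    obtain rfl | rfl : t = r ∨ t = s := by omega
    exacts [hrS, hsS]
  exact hHK.not_ge (hS_eq ▸ hSH)

/-- Lemma 6: every Hall `{p,q}`-subgroup of a group in which every Schmidt subgroup is Hall
is either nilpotent or a Schmidt group. -/
theorem stmt_12 {G : Type*} [Group G] [Finite G] (hHall : EverySchmidtIsHall G)
    (p q : ℕ) (hp : p.Prime) (hq : q.Prime) (hpq : p ≠ q)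
    (hpd : p ∣ Nat.card G) (hqd : q ∣ Nat.card G) (K : Subgroup G)
    (hKord : ∀ r : ℕ, r.Prime → r ∣ Nat.card K → r = p ∨ r = q)
    (hKind : Nat.Coprime K.index (p * q)) :
    Group.IsNilpotent ↥K ∨ IsSchmidtGroup ↥K :=
  stmt_12_general hHall p q K hKord
end

section
/- Let n ≥ 2 be an integer, p a prime, and let π be the set of primes q such that q divides p^n − 1 but q does not divide p^m − 1 for any integer m with 1 ≤ m < n. Then the general linear group GL(n, p) over the field with p elements has a cyclic Hall π-subgroup, i.e., a cyclic subgroup T such that every prime divisor of |T| lies in π and the index of T in GL(n,p) is divisible by no prime of π. -/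
/-!
A Singer cycle, i.e. a generator of `𝔽_{p^n}ˣ` acting on `𝔽_{p^n} ≅ 𝔽_pⁿ` by multiplication, has
order `p^n - 1` in `GL(n, p)`. Since `|GL(n, p)| = (p^n - 1) ∏_{1 ≤ i < n} p^i (p^(n-i) - 1)` and a
prime of `π` divides neither `p` nor any `p^(n-i) - 1`, the `π`-part of the cyclic group generated
by a Singer cycle is a Hall `π`-subgroup.
-/

open Finset

theorem Nat.exists_mul_eq_forall_prime_dvd (P : ℕ → Prop) {N : ℕ} (hN : N ≠ 0) :
    ∃ a b : ℕ, a * b = N ∧ (∀ r : ℕ, r.Prime → r ∣ a → P r) ∧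
      (∀ r : ℕ, r.Prime → r ∣ b → ¬ P r) := by
  induction N using induction_on_primes with
  | zero => exact absurd rfl hN
  | one => exact ⟨1, 1, rfl, fun r hr h => absurd (Nat.eq_one_of_dvd_one h) hr.ne_one,
      fun r hr h => absurd (Nat.eq_one_of_dvd_one h) hr.ne_one⟩
  | prime_mul q N hq ih =>
    obtain ⟨a, b, rfl, ha, hb⟩ := ih (right_ne_zero_of_mul hN)
    have dvd_prime_mul {c r : ℕ} (hr : r.Prime) (h : r ∣ q * c) : r = q ∨ r ∣ c :=
      (hr.dvd_mul.mp h).imp_left ((Nat.prime_dvd_prime_iff_eq hr hq).mp)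
    by_cases hPq : P q
    · refine ⟨q * a, b, by ring, fun r hr h => ?_, hb⟩
      rcases dvd_prime_mul hr h with rfl | h
      exacts [hPq, ha r hr h]
    · refine ⟨a, q * b, by ring, ha, fun r hr h => ?_⟩
      rcases dvd_prime_mul hr h with rfl | h
      exacts [hPq, hb r hr h]

theorem exists_isCyclic_hall_of_card_eq_orderOf_mul {G : Type*} [Group G] [Finite G]
    (P : ℕ → Prop) (g : G) {M : ℕ} (hcard : Nat.card G = orderOf g * M)
    (hM : ∀ r : ℕ, r.Prime → P r → ¬ r ∣ M) :
    ∃ T : Subgroup G, IsCyclic T ∧ (∀ r : ℕ, r.Prime → r ∣ Nat.card T → P r) ∧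
      (∀ r : ℕ, r.Prime → P r → ¬ r ∣ T.index) := by
  obtain ⟨a, b, hab, ha, hb⟩ :=
    Nat.exists_mul_eq_forall_prime_dvd P (orderOf_pos g).ne'
  have hab0 : a * b ≠ 0 := hab ▸ (orderOf_pos g).ne'
  have hcardT : Nat.card (Subgroup.zpowers (g ^ b)) = a := by
    rw [Nat.card_zpowers, orderOf_pow_of_dvd (right_ne_zero_of_mul hab0) (Dvd.intro_left a hab),
      ← hab, Nat.mul_div_cancel _ (Nat.pos_of_ne_zero (right_ne_zero_of_mul hab0))]
  have hindex : (Subgroup.zpowers (g ^ b)).index = b * M := by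
    have := (Subgroup.zpowers (g ^ b)).card_mul_index
    rw [hcard, hcardT, ← hab, mul_assoc] at this
    exact Nat.eq_of_mul_eq_mul_left (Nat.pos_of_ne_zero (left_ne_zero_of_mul hab0)) this
  refine ⟨Subgroup.zpowers (g ^ b), inferInstance, fun r hr h => ha r hr (hcardT ▸ h),
    fun r hr hPr h => ?_⟩
  rw [hindex] at h
  rcases hr.dvd_mul.mp h with h | h
  exacts [hb r hr h hPr, hM r hr hPr h]

theorem exists_units_monoidHom_GL_injective (F K : Type*) [Field F] [Field K] [Algebra F K]
    {n : ℕ} (hn : Module.finrank F K = n) [FiniteDimensional F K] :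
    ∃ φ : Kˣ →* GL (Fin n) F, Function.Injective φ := by
  let b := Module.finBasisOfFinrankEq F K hn
  exact ⟨Units.map (Algebra.leftMulMatrix b).toMonoidHom,
    Units.map_injective (Algebra.leftMulMatrix_injective b)⟩

theorem exists_orderOf_GL_eq_pow_sub_one (p : ℕ) [Fact p.Prime] {n : ℕ} (hn : n ≠ 0) :
    ∃ g : GL (Fin n) (ZMod p), orderOf g = p ^ n - 1 := by
  obtain ⟨φ, hφ⟩ := exists_units_monoidHom_GL_injective (ZMod p) (GaloisField p n)
    (GaloisField.finrank p hn)
  obtain ⟨x, hx⟩ := IsCyclic.exists_ofOrder_eq_natCard (α := (GaloisField p n)ˣ)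
  exact ⟨φ x, by rw [orderOf_injective φ hφ, hx, Nat.card_units, GaloisField.card p n hn]⟩

theorem prod_range_pow_sub_pow (q n : ℕ) (hn : n ≠ 0) :
    ∏ i ∈ range n, (q ^ n - q ^ i) = (q ^ n - 1) * ∏ i ∈ Ico 1 n, (q ^ n - q ^ i) := by
  rw [range_eq_Ico, prod_eq_prod_Ico_succ_bot (Nat.pos_of_ne_zero hn), pow_zero]

theorem Nat.Prime.not_dvd_prod_pow_sub_pow {r q n : ℕ} (hr : r.Prime) (hrq : ¬ r ∣ q)
    (hprim : ∀ m : ℕ, 1 ≤ m → m < n → ¬ r ∣ q ^ m - 1) :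
    ¬ r ∣ ∏ i ∈ Ico 1 n, (q ^ n - q ^ i) := by
  intro h
  obtain ⟨i, hi, hri⟩ := hr.prime.exists_mem_finset_dvd h
  rw [mem_Ico] at hi
  have hfac : q ^ n - q ^ i = q ^ i * (q ^ (n - i) - 1) := by
    rw [Nat.mul_sub, mul_one, ← pow_add, Nat.add_sub_cancel' hi.2.le]
  rw [hfac] at hri
  rcases hr.dvd_mul.mp hri with h | h
  exacts [hrq (hr.dvd_of_dvd_pow h), hprim (n - i) (by omega) (by omega) h]

theorem Nat.Prime.not_dvd_of_dvd_pow_sub_one {r q n : ℕ} (hr : r.Prime) (hq : q ≠ 0)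
    (hn : n ≠ 0) (h : r ∣ q ^ n - 1) : ¬ r ∣ q := by
  intro hrq
  have := Nat.dvd_sub (dvd_pow hrq hn) h
  rw [Nat.sub_sub_self (Nat.one_le_pow _ _ (Nat.pos_of_ne_zero hq))] at this
  exact hr.not_dvd_one this

/-- Lemma 7: for `n ≥ 2`, `GL(n, p)` has a cyclic Hall `π`-subgroup, where `π` is the set of
primes dividing `p^n - 1` but no `p^m - 1` with `1 ≤ m < n`. -/
theorem stmt_13 (n p : ℕ) (hn : 2 ≤ n) (hp : p.Prime) :
    ∃ T : Subgroup (GL (Fin n) (ZMod p)), IsCyclic ↥T ∧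
      (∀ r : ℕ, r.Prime → r ∣ Nat.card T →
        r ∣ p ^ n - 1 ∧ ∀ m : ℕ, 1 ≤ m → m < n → ¬ r ∣ p ^ m - 1) ∧
      (∀ r : ℕ, r.Prime → r ∣ p ^ n - 1 → (∀ m : ℕ, 1 ≤ m → m < n → ¬ r ∣ p ^ m - 1) →
        ¬ r ∣ T.index) := by
  have : Fact p.Prime := ⟨hp⟩
  have hn0 : n ≠ 0 := by omega
  obtain ⟨g, hg⟩ := exists_orderOf_GL_eq_pow_sub_one p hn0
  have hcard : Nat.card (GL (Fin n) (ZMod p)) = orderOf g * ∏ i ∈ Ico 1 n, (p ^ n - p ^ i) := by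
    rw [Matrix.card_GL_field, ZMod.card, Fin.prod_univ_eq_prod_range (fun i => p ^ n - p ^ i),
      prod_range_pow_sub_pow p n hn0, hg]
  obtain ⟨T, hT, hcardT, hindexT⟩ := exists_isCyclic_hall_of_card_eq_orderOf_mul
    (fun r => r ∣ p ^ n - 1 ∧ ∀ m : ℕ, 1 ≤ m → m < n → ¬ r ∣ p ^ m - 1) g hcard
    fun r hr ⟨hrN, hprim⟩ => hr.not_dvd_prod_pow_sub_pow
      (hr.not_dvd_of_dvd_pow_sub_one hp.ne_zero hn0 hrN) hprim
  exact ⟨T, hT, hcardT, fun r hr hrN hprim => hindexT r hr ⟨hrN, hprim⟩⟩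
end

section
/- For every integer n ≥ 3 there exists a finite non-nilpotent group G in which every Schmidt subgroup is a Hall subgroup of G and whose derived length is exactly n. In particular, the derived length of finite non-nilpotent groups all of whose Schmidt subgroups are Hall subgroups is not bounded above. -/
/-!
Take `G = S₃ × U`, where `U` is the group of upper unitriangular `m × m` matrices over `𝔽₅`
with `m = 2 ^ (n - 1) + 1`. As the orders `6` and `5 ^ _` are coprime, every subgroup of `G`
is a product `T₁ × T₂`, and `T₂` is a `5`-group, hence nilpotent. For a Schmidt subgroup,
`T₁` cannot be nilpotent, so `T₁ × 1` is a non-nilpotent subgroup and must be everything.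
Thus the subgroup is `T₁ × 1 ≅ T₁`, a Schmidt subgroup of the Schmidt group `S₃`, so it is
`S₃ × 1`, a Hall subgroup.

The derived length of `G` is that of `U`, since `S₃` is metabelian and `n ≥ 2`. If `U_d` is the
group of matrices `1 + X` with `X` vanishing below the `d`-th superdiagonal, then
`[U_a, U_b] ≤ U_(a + b)`, so the `k`-th derived subgroup of `U` lies in `U_(2 ^ k)`, trivial for
`2 ^ k ≥ m`. Conversely the transvection at position `(0, 2 ^ k)` is an iterated commutator
`[t_il, t_lj] = t_ij`, so it lies in the `k`-th derived subgroup, nontrivial for `2 ^ k < m`.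
-/

open scoped commutatorElement

section SchmidtHall

variable {G H A B : Type*} [Group G] [Group H] [Group A] [Group B]

theorem IsSchmidtGroup.eq_top_of_not_isNilpotent (hG : IsSchmidtGroup G) {K : Subgroup G}
    (hK : ¬Group.IsNilpotent K) : K = ⊤ :=
  not_imp_comm.mp (hG.2.2 K) hK

theorem IsSchmidtGroup.of_mulEquiv (e : G ≃* H) (hG : IsSchmidtGroup G) : IsSchmidtGroup H := by
  obtain ⟨hfin, hnil, hsub⟩ := hG
  refine ⟨Finite.of_equiv G e, fun _ => hnil (Group.nilpotent_of_mulEquiv e.symm),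
    fun K hK => ?_⟩
  have hK' : K.map (e.symm : H →* G) ≠ ⊤ := fun h =>
    hK (Subgroup.map_injective e.symm.injective
      (h.trans (Subgroup.map_top_of_surjective _ e.symm.surjective).symm))
  have := hsub _ hK'
  exact Group.nilpotent_of_mulEquiv (e.symm.subgroupMap K).symm

theorem IsSchmidtGroup.everySchmidtIsHall (hG : IsSchmidtGroup G) : EverySchmidtIsHall G :=
  fun S hS => by
    rw [IsHallSubgroup, hG.eq_top_of_not_isNilpotent hS.2.1, Subgroup.index_top]
    exact Nat.coprime_one_right _

theorem Subgroup.eq_prod_map_fst_map_snd_of_coprime [Finite A] [Finite B]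
    (hAB : (Nat.card A).Coprime (Nat.card B)) (T : Subgroup (A × B)) :
    T = (T.map (MonoidHom.fst A B)).prod (T.map (MonoidHom.snd A B)) := by
  -- `(a, b) ^ (|A| c) = (1, b)` for `c` inverse to `|A|` modulo the order of `b`
  have snd_mem : ∀ {a : A} {b : B}, (a, b) ∈ T → ((1, b) : A × B) ∈ T := by
    intro a b hab
    obtain ⟨c, hc⟩ :=
      exists_pow_eq_self_of_coprime (hAB.coprime_dvd_right (_root_.orderOf_dvd_natCard b))
    simpa [pow_mul, pow_card_eq_one', hc] using pow_mem hab (Nat.card A * c)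
  refine le_antisymm (fun x hx => ⟨⟨x, hx, rfl⟩, ⟨x, hx, rfl⟩⟩) ?_
  rintro ⟨a, b⟩ ⟨⟨⟨a, b₁⟩, h₁, rfl⟩, ⟨⟨a₂, b⟩, h₂, rfl⟩⟩
  have ha : ((a, 1) : A × B) ∈ T := by
    simpa using mul_mem h₁ (inv_mem (snd_mem h₁))
  simpa using mul_mem ha (snd_mem h₂)

theorem EverySchmidtIsHall.prod [Finite A] [Finite B] [Group.IsNilpotent B]
    (hAB : (Nat.card A).Coprime (Nat.card B)) (hA : EverySchmidtIsHall A) :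
    EverySchmidtIsHall (A × B) := by
  intro T hT
  obtain ⟨T₁, T₂, rfl⟩ : ∃ (T₁ : Subgroup A) (T₂ : Subgroup B), T = T₁.prod T₂ :=
    ⟨_, _, T.eq_prod_map_fst_map_snd_of_coprime hAB⟩
  have e : T₁.prod (⊥ : Subgroup B) ≃* T₁ := (T₁.prodEquiv ⊥).trans MulEquiv.prodUnique
  have hT₁ : ¬Group.IsNilpotent T₁ := fun _ =>
    hT.2.1 (Group.nilpotent_of_mulEquiv (T₁.prodEquiv T₂).symm)
  have hT₂ : T₂ = ⊥ := by
    have hle : T₁.prod ⊥ ≤ T₁.prod T₂ := Subgroup.prod_mono le_rfl bot_le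
    have htop := hT.eq_top_of_not_isNilpotent (K := (T₁.prod ⊥).subgroupOf (T₁.prod T₂))
      fun h => hT₁ (Group.nilpotent_of_mulEquiv ((Subgroup.subgroupOfEquivOfLe hle).trans e))
    refine eq_bot_iff.mpr fun b hb => ?_
    exact (Subgroup.mem_prod.mp (Subgroup.subgroupOf_eq_top.mp htop
      ((Subgroup.mem_prod (p := ((1 : A), b))).mpr ⟨one_mem T₁, hb⟩))).2
  subst hT₂
  have hall := hA T₁ (hT.of_mulEquiv e)
  rw [IsHallSubgroup, Nat.card_congr e.toEquiv, Subgroup.index_prod, Subgroup.index_bot]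
  exact hall.mul_right (hAB.coprime_dvd_left T₁.card_subgroup_dvd_card)

end SchmidtHall

theorem derivedSeries_prod {A B : Type*} [Group A] [Group B] (k : ℕ) :
    derivedSeries (A × B) k = (derivedSeries A k).prod (derivedSeries B k) := by
  induction k with
  | zero => simp only [derivedSeries_zero, Subgroup.top_prod_top]
  | succ k ih => simp only [derivedSeries_succ, ih, Subgroup.commutator_prod_prod]

namespace Equiv.Perm

theorem not_isNilpotent_fin_three : ¬Group.IsNilpotent (Perm (Fin 3)) := fun _ =>
  Group.IsNilpotent.center_ne_bot _ <| eq_bot_iff.mpr fun g hg => by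
    have : ∀ g : Perm (Fin 3), (∀ h, h * g = g * h) → g = 1 := by decide
    exact this g (Subgroup.mem_center_iff.mp hg)

theorem isSchmidtGroup_fin_three : IsSchmidtGroup (Perm (Fin 3)) := by
  refine ⟨inferInstance, not_isNilpotent_fin_three, fun H hH => ?_⟩
  have hcard : Nat.card (Perm (Fin 3)) = 6 := by rw [Nat.card_perm, Nat.card_fin]; rfl
  have hdvd : Nat.card H ∣ 6 := hcard ▸ H.card_subgroup_dvd_card
  have hne : Nat.card H ≠ 6 := fun h => hH (H.card_eq_iff_eq_top.mp (h.trans hcard.symm))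
  obtain ⟨p, k, hp, hk⟩ : ∃ p k, p.Prime ∧ Nat.card H = p ^ k := by
    have := Nat.le_of_dvd (by norm_num) hdvd
    interval_cases Nat.card H
    · norm_num at hdvd
    · exact ⟨2, 0, Nat.prime_two, rfl⟩
    · exact ⟨2, 1, Nat.prime_two, rfl⟩
    · exact ⟨3, 1, Nat.prime_three, rfl⟩
    · norm_num at hdvd
    · norm_num at hdvd
    · exact absurd rfl hne
  have := Fact.mk hp
  exact (IsPGroup.of_card hk).isNilpotent

theorem derivedSeries_fin_three {k : ℕ} (hk : 2 ≤ k) :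
    derivedSeries (Perm (Fin 3)) k = ⊥ := by
  let K := (sign : Perm (Fin 3) →* ℤˣ).ker
  have h1 : derivedSeries (Perm (Fin 3)) 1 ≤ K := Abelianization.commutator_subset_ker _
  have h2 : K ≤ Subgroup.centralizer K := by
    have : ∀ g h : Perm (Fin 3), sign g = 1 → sign h = 1 → h * g = g * h := by decide
    exact fun g hg h hh => this g h hg hh
  refine eq_bot_iff.mpr ((derivedSeries_antitone _ hk).trans ?_)
  rw [derivedSeries_succ]
  exact (Subgroup.commutator_mono h1 h1).trans
    (Subgroup.commutator_eq_bot_iff_le_centralizer.mpr h2).le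

end Equiv.Perm

namespace Matrix

variable {R : Type*} {m : ℕ}

def HasDepth [Zero R] (d : ℕ) (A : Matrix (Fin m) (Fin m) R) : Prop :=
  ∀ i j : Fin m, (j : ℕ) < i + d → A i j = 0

namespace HasDepth

section Ring

variable [Ring R] {a b d : ℕ} {A B : Matrix (Fin m) (Fin m) R}

theorem mono (hab : a ≤ b) (hA : HasDepth b A) : HasDepth a A :=
  fun i j hij => hA i j (by omega)

theorem zero (d : ℕ) : HasDepth d (0 : Matrix (Fin m) (Fin m) R) := fun _ _ _ => rfl

theorem one : HasDepth 0 (1 : Matrix (Fin m) (Fin m) R) :=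
  fun i j hij => one_apply_ne (fun h => by subst h; omega)

theorem add (hA : HasDepth d A) (hB : HasDepth d B) : HasDepth d (A + B) :=
  fun i j h => by rw [add_apply, hA i j h, hB i j h, add_zero]

theorem neg (hA : HasDepth d A) : HasDepth d (-A) :=
  fun i j h => by rw [neg_apply, hA i j h, neg_zero]

theorem sub (hA : HasDepth d A) (hB : HasDepth d B) : HasDepth d (A - B) :=
  sub_eq_add_neg A B ▸ hA.add hB.neg

theorem mul (hA : HasDepth a A) (hB : HasDepth b B) : HasDepth (a + b) (A * B) := by
  intro i j hij
  rw [mul_apply]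
  refine Finset.sum_eq_zero fun k _ => ?_
  by_cases hk : (k : ℕ) < i + a
  · rw [hA i k hk, zero_mul]
  · rw [hB k j (by omega), mul_zero]

theorem pow (hA : HasDepth d A) : ∀ k : ℕ, HasDepth (k * d) (A ^ k)
  | 0 => by simpa using one
  | k + 1 => by simpa only [pow_succ, add_one_mul] using (hA.pow k).mul hA

theorem eq_zero (hd : m ≤ d) (hA : HasDepth d A) : A = 0 :=
  ext fun i j => hA i j (by omega)

theorem of_sub_one (hA : HasDepth d (A - 1)) : HasDepth 0 A := by
  simpa using (hA.mono (Nat.zero_le d)).add one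

end Ring

theorem units_inv_sub_one [CommRing R] {d : ℕ} {u : GL (Fin m) R}
    (hu : HasDepth d (u.val - 1)) : HasDepth d (u⁻¹.val - 1) := by
  have hinv : HasDepth 0 u⁻¹.val := by
    have hu : BlockTriangular u.val id := fun i j hij => hu.of_sub_one i j (by simpa using hij)
    have := u.invertible
    rw [coe_units_inv]
    exact fun i j hij => blockTriangular_inv_of_blockTriangular hu (b := id) (by simpa using hij)
  have key : u⁻¹.val - 1 = -(u.val - 1) - (u.val - 1) * (u⁻¹.val - 1) := by
    have := u.mul_inv
    noncomm_ring [this]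
  rw [key]
  exact hu.neg.sub (hu.mul (hinv.sub one))

end HasDepth

variable (R) [CommRing R]

def unitsOfDepth (m d : ℕ) : Subgroup (GL (Fin m) R) where
  carrier := {u | HasDepth d (u.val - 1)}
  one_mem' := by simpa using HasDepth.zero d
  mul_mem' {u v} hu hv := by
    have key : (u * v).val - 1 = (u.val - 1) * (v.val - 1) + ((u.val - 1) + (v.val - 1)) := by
      rw [Units.val_mul]; noncomm_ring
    change HasDepth d _
    rw [key]
    exact ((hu.mul hv).mono (Nat.le_add_left d d)).add (hu.add hv)
  inv_mem' := HasDepth.units_inv_sub_one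

abbrev unitriangular (m : ℕ) : Subgroup (GL (Fin m) R) := unitsOfDepth R m 1

variable {R} {m : ℕ}

theorem mem_unitsOfDepth {d : ℕ} {u : GL (Fin m) R} :
    u ∈ unitsOfDepth R m d ↔ HasDepth d (u.val - 1) := Iff.rfl

theorem unitsOfDepth_eq_bot {d : ℕ} (hd : m ≤ d) : unitsOfDepth R m d = ⊥ :=
  eq_bot_iff.mpr fun _ hu => Units.ext (sub_eq_zero.mp (HasDepth.eq_zero hd hu))

theorem commutator_unitsOfDepth_le (a b : ℕ) :
    ⁅unitsOfDepth R m a, unitsOfDepth R m b⁆ ≤ unitsOfDepth R m (a + b) := by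
  rw [Subgroup.commutator_le]
  intro x hx y hy
  have hxy : HasDepth 0 (x⁻¹.val * y⁻¹.val) :=
    (inv_mem hx : HasDepth a _).of_sub_one.mul (inv_mem hy : HasDepth b _).of_sub_one
  -- `x y - y x = X Y - Y X` for `X = x - 1`, `Y = y - 1`, which has depth `a + b`
  have key : ⁅x, y⁆.val - 1
      = ((x.val - 1) * (y.val - 1) - (y.val - 1) * (x.val - 1)) * (x⁻¹.val * y⁻¹.val) := by
    have hx' := x.mul_inv
    have hy' := y.mul_inv
    calc ⁅x, y⁆.val - 1
        = x.val * y.val * x⁻¹.val * y⁻¹.val - y.val * (x.val * x⁻¹.val) * y⁻¹.val := by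
          rw [commutatorElement_def, hx', mul_one, hy']; push_cast; rfl
      _ = _ := by noncomm_ring
  rw [mem_unitsOfDepth, key]
  exact ((hx.mul hy).sub ((hy.mul hx).mono (by omega))).mul hxy

theorem map_derivedSeries_unitriangular_le (k : ℕ) :
    (derivedSeries (unitriangular R m) k).map (unitriangular R m).subtype
      ≤ unitsOfDepth R m (2 ^ k) := by
  induction k with
  | zero => rw [derivedSeries_zero, ← MonoidHom.range_eq_map, Subgroup.range_subtype, pow_zero]
  | succ k ih =>
    rw [derivedSeries_succ, Subgroup.map_commutator, pow_succ, mul_two]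
    exact (Subgroup.commutator_mono ih ih).trans (commutator_unitsOfDepth_le _ _)

theorem derivedSeries_unitriangular_eq_bot {k : ℕ} (hk : m ≤ 2 ^ k) :
    derivedSeries (unitriangular R m) k = ⊥ := by
  rw [← Subgroup.map_eq_bot_iff_of_injective _ (Subgroup.subtype_injective _), eq_bot_iff,
    ← unitsOfDepth_eq_bot hk]
  exact map_derivedSeries_unitriangular_le k

theorem SpecialLinearGroup.commutator_transvection {n : Type*} [DecidableEq n] [Fintype n]
    {i j k : n} (hij : i ≠ j) (hjk : j ≠ k) (hik : i ≠ k) (a b : R) :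
    ⁅SpecialLinearGroup.transvection hij a, SpecialLinearGroup.transvection hjk b⁆
      = SpecialLinearGroup.transvection hik (a * b) := by
  rw [commutatorElement_def, SpecialLinearGroup.transvection_inv,
    SpecialLinearGroup.transvection_inv]
  apply Subtype.ext
  simp only [SpecialLinearGroup.coe_mul, SpecialLinearGroup.transvection_coe, ← single_neg]
  simp [mul_add, add_mul, single_mul_single_of_ne, hij.symm, hjk.symm, hik.symm]
  abel

theorem toGL_transvection_mem_unitriangular {i j : Fin m} (hij : i < j) (c : R) :
    SpecialLinearGroup.toGL (SpecialLinearGroup.transvection hij.ne c) ∈ unitriangular R m := by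
  intro a b hab
  have : ¬(i = a ∧ j = b) := by rintro ⟨rfl, rfl⟩; exact absurd hab (by simpa using hij)
  simp [SpecialLinearGroup.transvection_coe, this]

theorem toGL_transvection_mem_map_derivedSeries (k : ℕ) {i j : Fin m} (hij : i < j)
    (hk : (j : ℕ) = i + 2 ^ k) :
    SpecialLinearGroup.toGL (SpecialLinearGroup.transvection hij.ne (1 : R))
      ∈ (derivedSeries (unitriangular R m) k).map (unitriangular R m).subtype := by
  induction k generalizing i j with
  | zero =>
    rw [derivedSeries_zero, ← MonoidHom.range_eq_map, Subgroup.range_subtype]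
    exact toGL_transvection_mem_unitriangular hij 1
  | succ k ih =>
    rw [pow_succ, mul_two, ← add_assoc] at hk
    let l : Fin m := ⟨i + 2 ^ k, by omega⟩
    have hil : i < l := Fin.lt_def.mpr (by simp [l])
    have hlj : l < j := Fin.lt_def.mpr (by simp [l]; omega)
    rw [← mul_one (1 : R), ← SpecialLinearGroup.commutator_transvection hil.ne hlj.ne,
      map_commutatorElement, derivedSeries_succ, Subgroup.map_commutator]
    exact Subgroup.commutator_mem_commutator (ih hil rfl) (ih hlj hk)

theorem derivedSeries_unitriangular_ne_bot [Nontrivial R] {k : ℕ} (hk : 2 ^ k < m) :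
    derivedSeries (unitriangular R m) k ≠ ⊥ := by
  intro h
  have hlt : (⟨0, (Nat.zero_le _).trans_lt hk⟩ : Fin m) < ⟨2 ^ k, hk⟩ :=
    Fin.lt_def.mpr (Nat.two_pow_pos k)
  have hmem := toGL_transvection_mem_map_derivedSeries (R := R) k hlt (zero_add _).symm
  rw [h, Subgroup.map_bot, Subgroup.mem_bot,
    map_eq_one_iff _ SpecialLinearGroup.toGL_injective] at hmem
  have := (SpecialLinearGroup.transvection_mem_center_iff hlt.ne (1 : R)).mp (hmem ▸ one_mem _)
  exact one_ne_zero this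

theorem isPGroup_unitriangular (p : ℕ) [Fact p.Prime] [CharP R p] :
    IsPGroup p (unitriangular R m) := by
  intro u
  refine ⟨m, Subtype.ext (Units.ext ?_)⟩
  rcases isEmpty_or_nonempty (Fin m) with _ | _
  · exact Subsingleton.elim _ _
  have hX : HasDepth 1 (u.1.val - 1) := u.2
  have hXp : (u.1.val - 1) ^ p ^ m = 0 :=
    (hX.pow _).eq_zero (by simpa using (Nat.lt_pow_self (Fact.out : p.Prime).one_lt).le)
  calc (u ^ p ^ m).1.val = (u.1.val - 1 + 1) ^ p ^ m := by simp
    _ = 1 := by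
      rw [add_pow_char_pow_of_commute _ _ (Commute.one_right _), hXp, one_pow, zero_add]

end Matrix

/-- Remark 2: for every `n ≥ 3` there is a finite non-nilpotent group, all of whose Schmidt
subgroups are Hall subgroups, with derived length exactly `n`. -/
theorem stmt_14 (n : ℕ) (hn : 3 ≤ n) :
    ∃ (G : Type) (_ : Group G) (_ : Finite G),
      ¬ Group.IsNilpotent G ∧ EverySchmidtIsHall G ∧
      derivedSeries G n = ⊥ ∧ derivedSeries G (n - 1) ≠ ⊥ := by
  have : Fact (Nat.Prime 5) := ⟨by norm_num⟩
  let U := Matrix.unitriangular (ZMod 5) (2 ^ (n - 1) + 1)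
  have hU : IsPGroup 5 U := Matrix.isPGroup_unitriangular 5
  have : Group.IsNilpotent U := hU.isNilpotent
  have hcop : (Nat.card (Equiv.Perm (Fin 3))).Coprime (Nat.card U) := by
    obtain ⟨k, hk⟩ := IsPGroup.iff_card.mp hU
    rw [Nat.card_perm, Nat.card_fin, hk]
    exact Nat.Coprime.pow_right k (by decide)
  refine ⟨Equiv.Perm (Fin 3) × U, inferInstance, inferInstance, fun _ => ?_,
    Equiv.Perm.isSchmidtGroup_fin_three.everySchmidtIsHall.prod hcop, ?_, ?_⟩
  · exact Equiv.Perm.not_isNilpotent_fin_three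
      (Group.nilpotent_of_surjective (MonoidHom.fst _ U) Prod.fst_surjective)
  · have hm : 2 ^ (n - 1) + 1 ≤ 2 ^ n := by
      have := Nat.one_le_two_pow (n := n - 1)
      have : 2 ^ n = 2 ^ (n - 1) * 2 := by rw [← pow_succ, Nat.sub_add_cancel (by omega)]
      omega
    rw [derivedSeries_prod, Equiv.Perm.derivedSeries_fin_three (by omega),
      Matrix.derivedSeries_unitriangular_eq_bot hm, Subgroup.bot_prod_bot]
  · rw [derivedSeries_prod, Ne, Subgroup.prod_eq_bot_iff, not_and_or]
    exact Or.inr (Matrix.derivedSeries_unitriangular_ne_bot (Nat.lt_succ_self _))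
end

section
/- Let S be a Schmidt group with normal Sylow p-subgroup P (p a prime). If P is nonabelian, then Z(P) = P' = Φ(P), where P' is the derived subgroup of P and Φ(P) is the Frattini subgroup of P. -/
/-!
As `S` is not nilpotent, some `p'`-element `y` with `S = P⟨y⟩` acts nontrivially on `P`: otherwise
every `p'`-element centralizes `P`, and `S` is the central product of `P` with the proper, hence
nilpotent, subgroup `C_S(P)`. A subgroup `N < P` that is normal in `S` lies in the proper, hence
nilpotent, subgroup `N⟨y⟩`, so `y` centralizes `N`. For `N = [P, y]` this would give
`[x, y]^o(y) = [x, y^o(y)] = 1`, so `y` would centralize `P`; hence `[P, y] = P`. Now `Φ(P)` and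
`Z(P)` are proper characteristic subgroups of `P`, hence centralized by `y`. The three subgroups
lemma turns `[Φ(P), y] = 1` and `[P, y] = P` into `[P, Φ(P)] = 1`, that is `Φ(P) ≤ Z(P)`. On
`P/P'` the norm `a ↦ ∏ᵢ a^(yⁱ)` kills `[P/P', y]` and raises fixed points to the power `o(y)`,
which is prime to `p`; so a fixed point of `y` in `[P, y] = P` lies in `P'`, and `Z(P) ≤ P'`.
Finally `P' ≤ Φ(P)` in every nilpotent group.
-/

open Subgroup
open scoped commutatorElement Pointwise

section GroupTheory

variable {G : Type*} [Group G]

theorem commutatorElement_pow_left {a b : G} (h : Commute ⁅a, b⁆ a) (m : ℕ) :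
    ⁅a ^ m, b⁆ = ⁅a, b⁆ ^ m := by
  induction m with
  | zero => simp
  | succ m ih =>
    rw [pow_succ', commutatorElement_mul_left_eq_conj_mul, ih, (h.pow_left m).symm.eq,
      mul_inv_cancel_right, pow_succ]

theorem commutatorElement_pow_right {a b : G} (h : Commute ⁅a, b⁆ b) (m : ℕ) :
    ⁅a, b ^ m⁆ = ⁅a, b⁆ ^ m := by
  induction m with
  | zero => simp
  | succ m ih =>
    rw [pow_succ, commutatorElement_mul_right_eq_mul_conj, ih, mul_assoc _ (b ^ m),
      ← (h.pow_right m).eq, ← mul_assoc, mul_inv_cancel_right, pow_succ]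

theorem orderOf_commutatorElement_dvd_left {a b : G} (h : Commute ⁅a, b⁆ a) :
    orderOf ⁅a, b⁆ ∣ orderOf a :=
  orderOf_dvd_of_pow_eq_one <| by
    rw [← commutatorElement_pow_left h, pow_orderOf_eq_one, commutatorElement_one_left]

theorem orderOf_commutatorElement_dvd_right {a b : G} (h : Commute ⁅a, b⁆ b) :
    orderOf ⁅a, b⁆ ∣ orderOf b :=
  orderOf_dvd_of_pow_eq_one <| by
    rw [← commutatorElement_pow_right h, pow_orderOf_eq_one, commutatorElement_one_right]

theorem Group.IsNilpotent.commute_of_coprime_orderOf [Group.IsNilpotent G] {a b : G}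
    (h : (orderOf a).Coprime (orderOf b)) : Commute a b := by
  suffices ∀ a b : G, (orderOf a).Coprime (orderOf b) → Commute a b from this a b h
  refine Group.nilpotent_center_quotient_ind
    (P := fun G _ _ => ∀ a b : G, (orderOf a).Coprime (orderOf b) → Commute a b) G
    (fun G _ _ a b _ => Subsingleton.elim a b ▸ Commute.refl a) fun G _ _ ih a b h => ?_
  have hcomm : Commute (a : G ⧸ center G) b :=
    ih _ _ ((h.coprime_dvd_left (orderOf_map_dvd (QuotientGroup.mk' _) a)).coprime_dvd_right
      (orderOf_map_dvd (QuotientGroup.mk' _) b))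
  have hcenter : ⁅a, b⁆ ∈ center G := by
    rwa [← QuotientGroup.eq_one_iff, ← QuotientGroup.mk'_apply, map_commutatorElement,
      commutatorElement_eq_one_iff_commute]
  have hcentral (g : G) : Commute ⁅a, b⁆ g := ((mem_center_iff.mp hcenter) g).symm
  rw [← commutatorElement_eq_one_iff_commute, ← orderOf_eq_one_iff]
  exact Nat.eq_one_of_dvd_coprimes h (orderOf_commutatorElement_dvd_left (hcentral a))
    (orderOf_commutatorElement_dvd_right (hcentral b))

theorem commutator_le_of_isCoatom {M : Subgroup G} [M.Normal] (hM : IsCoatom M) :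
    commutator G ≤ M := by
  obtain ⟨g, hg⟩ := SetLike.exists_not_mem_of_ne_top M hM.1
  exact Normal.commutator_le_of_self_sup_commutative_eq_top (H := zpowers g)
    (hM.2 _ (left_lt_sup.mpr fun h => hg (h (mem_zpowers g)))) inferInstance

theorem Group.IsNilpotent.commutator_le_frattini [Group.IsNilpotent G] :
    commutator G ≤ frattini G :=
  le_iInf₂ fun M hM =>
    have := NormalizerCondition.normal_of_coatom M Group.normalizerCondition_of_isNilpotent hM
    commutator_le_of_isCoatom hM

theorem Group.isNilpotent_of_le_centralizer_of_sup_eq_top {H K : Subgroup G}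
    [Group.IsNilpotent H] [Group.IsNilpotent K] (hHK : H ≤ centralizer K) (hsup : H ⊔ K = ⊤) :
    Group.IsNilpotent G := by
  refine Group.nilpotent_of_surjective
    (MonoidHom.noncommCoprod H.subtype K.subtype fun h k => Commute.symm (hHK h.2 k k.2)) ?_
  rw [← MonoidHom.range_eq_top, MonoidHom.noncommCoprod_range, range_subtype, range_subtype, hsup]

theorem Subgroup.map_subtype_lt {H : Subgroup G} {K : Subgroup H} (hK : K ≠ ⊤) :
    K.map H.subtype < H := by
  simpa [← MonoidHom.range_eq_map] using map_subtype_lt_map_subtype.mpr hK.lt_top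

theorem Subgroup.eq_of_sup_eq_top_of_disjoint {N H K : Subgroup G} [N.Normal] (hNH : N ≤ H)
    (hsup : N ⊔ K = ⊤) (hdisj : Disjoint H K) : N = H := by
  refine le_antisymm hNH fun x hx => ?_
  have : x ∈ (N : Set G) * ((K ⊓ H : Subgroup G) : Set G) := by
    rw [mul_inf_assoc N K H hNH, ← normal_mul, hsup]
    exact ⟨trivial, hx⟩
  rwa [inf_comm, disjoint_iff.mp hdisj, coe_bot, Set.singleton_one, mul_one] at this

theorem Subgroup.eq_top_of_forall_exists_sylow_le [Finite G] {H : Subgroup G}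
    (h : ∀ (q : ℕ) [Fact q.Prime], ∃ Q : Sylow q G, (Q : Subgroup G) ≤ H) : H = ⊤ := by
  rw [← index_eq_one]
  by_contra hne
  obtain ⟨q, hq, hqH⟩ := Nat.exists_prime_and_dvd hne
  have := Fact.mk hq
  obtain ⟨Q, hQ⟩ := h q
  exact Q.not_dvd_index (hqH.trans (index_dvd_of_le hQ))

theorem Sylow.sup_eq_top_of_forall_coprime_mem [Finite G] {p : ℕ} [Fact p.Prime] (P : Sylow p G)
    {H : Subgroup G} (hH : ∀ g : G, (orderOf g).Coprime (Nat.card P) → g ∈ H) :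
    (P : Subgroup G) ⊔ H = ⊤ := by
  refine eq_top_of_forall_exists_sylow_le fun q _ => ?_
  by_cases hqp : q = p
  · subst hqp
    exact ⟨P, le_sup_left⟩
  · obtain ⟨Q⟩ : Nonempty (Sylow q G) := inferInstance
    refine ⟨Q, le_sup_of_le_right fun g hg => hH g ?_⟩
    exact (IsPGroup.coprime_card_of_ne q p hqp (Q : Subgroup G) (P : Subgroup G) Q.isPGroup'
      P.isPGroup').coprime_dvd_left (Q.orderOf_dvd_natCard hg)

theorem Subgroup.commutator_eq_bot_of_commutator_eq_self {H₁ H₂ H₃ : Subgroup G}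
    (h₁₂ : ⁅H₁, H₂⁆ ≤ H₂) (h₂₃ : ⁅H₂, H₃⁆ = ⊥) (h₁₃ : ⁅H₁, H₃⁆ = H₁) : ⁅H₁, H₂⁆ = ⊥ := by
  have := commutator_commutator_eq_bot_of_rotate (H₁ := H₃) (H₂ := H₁) (H₃ := H₂)
    (eq_bot_iff.mpr (h₂₃ ▸ commutator_mono h₁₂ le_rfl)) (by rw [h₂₃, commutator_bot_left])
  rwa [commutator_comm H₃ H₁, h₁₃] at this

end GroupTheory

def MulAut.abelianizationHom (G : Type*) [Group G] : MulAut G →* MulAut (Abelianization G) where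
  toFun e := e.abelianizationCongr
  map_one' := MulEquiv.ext fun a => QuotientGroup.induction_on a fun _ => rfl
  map_mul' _ _ := MulEquiv.ext fun a => QuotientGroup.induction_on a fun _ => rfl

section CoprimeAction

variable {G A : Type*} [Group G] [CommGroup A] (ρ : G →* MulAut A)

/-- The subgroup `[A, G]`. -/
def actionCommutator : Subgroup A := closure (Set.range fun x : A × G => x.1 / ρ x.2 x.1)

def actionNorm [Fintype G] : A →* A := ∏ g, (ρ g).toMonoidHom

theorem actionNorm_apply [Fintype G] (a : A) : actionNorm ρ a = ∏ g, ρ g a :=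
  MonoidHom.finsetProd_apply _ _ _

theorem actionNorm_map [Fintype G] (h : G) (a : A) : actionNorm ρ (ρ h a) = actionNorm ρ a := by
  simp only [actionNorm_apply, ← MulAut.mul_apply, ← map_mul]
  exact Fintype.prod_equiv (Equiv.mulRight h) _ _ fun _ => rfl

theorem actionCommutator_le_ker_actionNorm [Fintype G] :
    actionCommutator ρ ≤ (actionNorm ρ).ker :=
  closure_le _ |>.mpr <| by
    rintro _ ⟨⟨b, g⟩, rfl⟩
    simp [actionNorm_map]

theorem eq_one_of_forall_map_eq_of_mem_actionCommutator [Finite G]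
    (hcop : (Nat.card G).Coprime (Nat.card A)) {a : A} (hfix : ∀ g, ρ g a = a)
    (ha : a ∈ actionCommutator ρ) : a = 1 := by
  have := Fintype.ofFinite G
  have hpow : a ^ Nat.card G = 1 :=
    calc a ^ Nat.card G = actionNorm ρ a := by simp [actionNorm_apply, hfix]
      _ = 1 := actionCommutator_le_ker_actionNorm ρ ha
  exact orderOf_eq_one_iff.mp <| Nat.eq_one_of_dvd_coprimes hcop (orderOf_dvd_of_pow_eq_one hpow)
    (orderOf_dvd_natCard a)

end CoprimeAction

theorem mem_commutator_of_commute {S : Type*} [Group S] [Finite S] {P : Subgroup S} [P.Normal]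
    {y : S} (hy : (orderOf y).Coprime (Nat.card P)) (hP : ⁅P, zpowers y⁆ = P) {c : P}
    (hc : Commute (c : S) y) : c ∈ commutator P := by
  let ρ := (MulAut.abelianizationHom P).comp (MulAut.conjNormal.comp (zpowers y).subtype)
  have hρ (g : zpowers y) (u : P) :
      ρ g (Abelianization.of u) = Abelianization.of (MulAut.conjNormal (g : S) u) := rfl
  rw [← QuotientGroup.eq_one_iff]
  refine eq_one_of_forall_map_eq_of_mem_actionCommutator ρ ?_ ?_ ?_
  · rw [Nat.card_zpowers]
    exact hy.coprime_dvd_right (card_quotient_dvd_card _)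
  · rintro ⟨g, k, rfl⟩
    refine (hρ _ c).trans (congrArg _ (Subtype.ext ?_))
    rw [MulAut.conjNormal_apply, ← (hc.zpow_right k).eq, mul_inv_cancel_right]
  · have hle : P ≤ ((actionCommutator ρ).comap Abelianization.of).map P.subtype := by
      refine hP.ge.trans <| commutator_le.mpr fun u hu z hz =>
        ⟨⟨⁅u, z⁆, commutator_le_left P _ (commutator_mem_commutator hu hz)⟩,
          subset_closure ⟨⟨Abelianization.of ⟨u, hu⟩, ⟨z, hz⟩⟩, ?_⟩, rfl⟩
      dsimp only
      rw [hρ _ ⟨u, hu⟩, ← map_div]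
      congr 1
      ext
      simp [commutatorElement_def, MulAut.conjNormal_apply, div_eq_mul_inv, mul_assoc]
    obtain ⟨c', hc', hcc'⟩ := hle c.2
    rwa [← Subtype.ext hcc']

theorem le_center_of_forall_commute {S : Type*} [Group S] {P : Subgroup S} {y : S}
    (hP : ⁅P, zpowers y⁆ = P) (K : Subgroup P) [(K.map P.subtype).Normal]
    (hK : ∀ k ∈ K, Commute (k : S) y) : K ≤ center P := by
  have hKy : ⁅K.map P.subtype, zpowers y⁆ = ⊥ := by
    refine commutator_eq_bot_iff_le_centralizer.mpr ?_
    rintro _ ⟨k, hk, rfl⟩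
    rintro _ ⟨n, rfl⟩
    exact ((hK k hk).zpow_right n).symm.eq
  have hPK := commutator_eq_bot_iff_le_centralizer.mp
    (commutator_eq_bot_of_commutator_eq_self (commutator_le_right _ _) hKy hP)
  exact fun k hk => mem_center_iff.mpr fun g =>
    Subtype.ext (mem_centralizer_iff.mp (hPK g.2) _ (mem_map_of_mem _ hk)).symm

namespace IsSchmidtGroup

variable {S : Type*} [Group S]

theorem commute_of_coprime (hS : IsSchmidtGroup S) {H : Subgroup S} (hH : H ≠ ⊤) {x y : S}
    (hx : x ∈ H) (hy : y ∈ H) (hxy : (orderOf x).Coprime (orderOf y)) : Commute x y := by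
  have := hS.2.2 H hH
  have h := Group.IsNilpotent.commute_of_coprime_orderOf (G := H) (a := ⟨x, hx⟩) (b := ⟨y, hy⟩)
    (by simpa only [orderOf_mk] using hxy)
  exact h.map H.subtype

theorem commute_of_lt (hS : IsSchmidtGroup S) {P N : Subgroup S} [N.Normal] (hNP : N < P) {y : S}
    (hy : (orderOf y).Coprime (Nat.card P)) {x : S} (hx : x ∈ N) : Commute x y := by
  refine hS.commute_of_coprime (H := N ⊔ zpowers y) (fun htop => hNP.ne ?_) (mem_sup_left hx)
    (mem_sup_right (mem_zpowers y)) (hy.symm.coprime_dvd_left (P.orderOf_dvd_natCard (hNP.le hx)))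
  exact eq_of_sup_eq_top_of_disjoint hNP.le htop
    (disjoint_of_coprime_natCard (by rwa [Nat.card_zpowers, Nat.coprime_comm]))

theorem exists_generator_not_mem_centralizer [Finite S] (hS : IsSchmidtGroup S) {p : ℕ}
    [Fact p.Prime] (P : Sylow p S) (hP : center P ≠ ⊤) :
    ∃ y : S, (orderOf y).Coprime (Nat.card P) ∧ (P : Subgroup S) ⊔ zpowers y = ⊤ ∧
      y ∉ centralizer (P : Subgroup S) := by
  by_contra! h
  have hcent (y : S) (hy : (orderOf y).Coprime (Nat.card P)) :
      y ∈ centralizer (P : Subgroup S) := by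
    by_cases htop : (P : Subgroup S) ⊔ zpowers y = ⊤
    · exact h y hy htop
    · exact mem_centralizer_iff.mpr fun x hx => (hS.commute_of_coprime htop (mem_sup_left hx)
        (mem_sup_right (mem_zpowers y)) (hy.symm.coprime_dvd_left (P.orderOf_dvd_natCard hx))).eq
  have hsup := P.sup_eq_top_of_forall_coprime_mem hcent
  have hC : centralizer ((P : Subgroup S) : Set S) ≠ ⊤ := by
    refine fun hC => hP <| eq_top_iff.mpr fun a _ => mem_center_iff.mpr fun g => Subtype.ext ?_
    have ha : (a : S) ∈ centralizer (P : Subgroup S) := hC ▸ mem_top _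
    exact mem_centralizer_iff.mp ha g g.2
  have := hS.2.2 _ hC
  have := P.isPGroup'.isNilpotent
  exact hS.2.1 <|
    Group.isNilpotent_of_le_centralizer_of_sup_eq_top (le_centralizer_iff.mp le_rfl) hsup

theorem commutator_zpowers_eq_self (hS : IsSchmidtGroup S) {P : Subgroup S} [P.Normal] {y : S}
    (hy : (orderOf y).Coprime (Nat.card P)) (hsup : P ⊔ zpowers y = ⊤) (hyP : y ∉ centralizer P) :
    ⁅P, zpowers y⁆ = P := by
  have : ⁅P, zpowers y⁆.Normal := normalizer_eq_top_iff.mp <| top_le_iff.mp <|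
    hsup ▸ sup_le (normalizer_commutator_ge_left P _) (normalizer_commutator_ge_right P _)
  by_contra hne
  obtain ⟨x, hx, hxy⟩ : ∃ x ∈ P, ¬ Commute x y := by
    simpa [mem_centralizer_iff, commute_iff_eq] using hyP
  have hmem : ⁅x, y⁆ ∈ ⁅P, zpowers y⁆ := commutator_mem_commutator hx (mem_zpowers y)
  have hc : Commute ⁅x, y⁆ y := hS.commute_of_lt ((commutator_le_left P _).lt_of_ne hne) hy hmem
  refine hxy (commutatorElement_eq_one_iff_commute.mp (orderOf_eq_one_iff.mp ?_))
  exact Nat.eq_one_of_dvd_coprimes hy (orderOf_commutatorElement_dvd_right hc)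
    (P.orderOf_dvd_natCard (commutator_le_left P _ hmem))

end IsSchmidtGroup

/-- Lemma 1(4): if the normal Sylow `p`-subgroup `P` of a Schmidt group is nonabelian, then
`Z(P) = P' = Φ(P)`. -/
theorem stmt_17 (S : Type*) [Group S] [Finite S] (hS : IsSchmidtGroup S)
    (p : ℕ) (hp : p.Prime) (P : Sylow p S) (hPn : (P : Subgroup S).Normal)
    (hnab : ¬ ∀ a b : ↥(P : Subgroup S), a * b = b * a) :
    Subgroup.center ↥(P : Subgroup S) = commutator ↥(P : Subgroup S) ∧
      commutator ↥(P : Subgroup S) = frattini ↥(P : Subgroup S) := by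
  have := Fact.mk hp
  have := P.isPGroup'.isNilpotent
  have hZ : center P ≠ ⊤ := fun hZ => hnab fun a b => mem_center_iff.mp (hZ ▸ mem_top b) a
  obtain ⟨y, hy, hsup, hyP⟩ := hS.exists_generator_not_mem_centralizer P hZ
  have hPy := hS.commutator_zpowers_eq_self hy hsup hyP
  have hcomm (K : Subgroup P) [(K.map (P : Subgroup S).subtype).Normal] (hK : K ≠ ⊤) :
      ∀ k ∈ K, Commute (k : S) y := fun _ hk =>
    hS.commute_of_lt (map_subtype_lt hK) hy (mem_map_of_mem _ hk)
  have hΦ : frattini P ≠ ⊤ := fun hΦ => hZ (frattini_nongenerating (by rw [hΦ, sup_top_eq]))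
  have hΦZ : frattini P ≤ center P := le_center_of_forall_commute hPy _ (hcomm _ hΦ)
  have hZP' : center P ≤ commutator P := fun c hc =>
    mem_commutator_of_commute hy hPy (hcomm _ hZ c hc)
  have hP'Φ : commutator P ≤ frattini P := Group.IsNilpotent.commutator_le_frattini
  exact ⟨hZP'.antisymm (hP'Φ.trans hΦZ), hP'Φ.antisymm (hΦZ.trans hZP')⟩
end
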